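/- Let G be a finite stop parity game with a player-aware coloring χ, let v, w be vertices, let ρ be a strategy safe from v and ρ' a strategy safe from w, and let c ∈ C_E be such that every vertex of color c has an outgoing edge to w. Then there exists a strategy ρ'' that is safe from v in G and satisfies Φ(G, ρ'', v) = Merge(Φ(G, ρ, v), c, Φ(G, ρ', w)). -/

import Mathlib

open Classical

/-- `p ≺ q` iff `(-1)^p * p < (-1)^q * q` computed in `ℤ`. -/
def prec (p q : ℕ) : Prop := ((-1 : ℤ) ^ p * p < (-1 : ℤ) ^ q * q)

/-- `p ⪯ q` iff `p ≺ q` or `p = q`. -/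
def preceq (p q : ℕ) : Prop := prec p q ∨ p = q

/-- An enforcement is a partial function `C ⇀ ℕ`, modelled as `C → Option ℕ`.
`esub P Q` is the relation `P ⊑ Q`: `dom P ⊆ dom Q` and for every `a ∈ dom P`,
`Q a ⪯ P a`. -/
def esub {C : Type*} (P Q : C → Option ℕ) : Prop :=
  ∀ a p, P a = some p → ∃ q, Q a = some q ∧ preceq q p

/-- The `⪯`-minimum of a set of naturals, when it exists. -/
noncomputable def pmin (S : Set ℕ) : Option ℕ :=
  if h : ∃ m ∈ S, ∀ x ∈ S, preceq m x then some h.choose else none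

/-- The union `P ⊔ Q`: its domain is `dom P ∪ dom Q` and its value at `a`
is the `⪯`-minimum of the defined ones among `P a`, `Q a`. -/
noncomputable def eunion {C : Type*} (P Q : C → Option ℕ) : C → Option ℕ := fun a =>
  match P a, Q a with
  | none, q => q
  | some p, none => some p
  | some p, some q => some (if preceq p q then p else q)

/-- The lift `Q↑r`: same domain as `Q`, value `max (Q a) r`. -/
def elift {C : Type*} (Q : C → Option ℕ) (r : ℕ) : C → Option ℕ :=
  fun a => (Q a).map fun q => max q r

/-- `Merge(P, c, Q)`, where `CE` is the set of colors of player E (the colors of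
player O form its complement). -/
noncomputable def emerge {C : Type*} (CE : Set C) (P : C → Option ℕ) (c : C)
    (Q : C → Option ℕ) : C → Option ℕ :=
  match P c with
  | none => P
  | some r =>
      if c ∈ CE then eunion (fun a => if a = c then none else P a) (elift Q r)
      else eunion P (elift Q r)

/-- An arena: a directed graph with vertices partitioned between the players;
`owner u = true` means `u` belongs to player E. -/
structure Arena (V : Type*) where
  owner : V → Bool
  edge : V → V → Prop

/-- A strategy for player E in a stop parity game on arena `A`: to every finite
history (the list of previously visited vertices) and current vertex `u ∈ V_E` it
assigns either a vertex `w` with `edge u w` (`some w`) or the move STOP (`none`). -/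
structure EStrategy {V : Type*} (A : Arena V) where
  move : List V → V → Option V
  legal : ∀ h u w, move h u = some w → A.edge u w

/-- A play from `v` in the stop parity game on arena `A`: a maximal sequence of
vertices starting at `v` and following edges; a finite play either is ended
by the STOP move of player E at one of his vertices (`stopped = true`) or ends at
a vertex with no outgoing edges (`stopped = false`). -/
structure Play {V : Type*} (A : Arena V) (v : V) where
  seq : ℕ → Option V
  stopped : Bool
  start : seq 0 = some v
  none_succ : ∀ n, seq n = none → seq (n + 1) = none
  step : ∀ n u w, seq n = some u → seq (n + 1) = some w → A.edge u w
  maximal : ∀ n u, seq n = some u → seq (n + 1) = none →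
    (stopped = true ∧ A.owner u = true) ∨ (stopped = false ∧ ∀ w, ¬ A.edge u w)

/-- The history of a play before position `n` (the list of its first `n` vertices). -/
def Play.hist {V : Type*} {A : Arena V} {v : V} (p : Play A v) (n : ℕ) : List V :=
  (List.range n).filterMap p.seq

/-- A play is consistent with a strategy `ρ` of player E if every move made from a
vertex of player E is the one prescribed by `ρ` (where `ρ` prescribing `none` means
that the play is ended by STOP). -/
def ConsistentWith {V : Type*} {A : Arena V} {v : V} (ρ : EStrategy A) (p : Play A v) :
    Prop :=
  ∀ n u, p.seq n = some u → A.owner u = true →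
    p.seq (n + 1) = ρ.move (p.hist n) u ∧ (p.seq (n + 1) = none → p.stopped = true)

/-- A play is finite if its sequence is eventually `none`. -/
def Play.IsFinite {V : Type*} {A : Arena V} {v : V} (p : Play A v) : Prop :=
  ∃ n, p.seq n = none

/-- A play ended by the STOP move. -/
def Play.EndedByStop {V : Type*} {A : Arena V} {v : V} (p : Play A v) : Prop :=
  p.IsFinite ∧ p.stopped = true

/-- The maximum rank occurring infinitely often on a play. -/
noncomputable def infRank {V : Type*} {A : Arena V} {v : V} (rank : V → ℕ)
    (p : Play A v) : ℕ :=
  sSup {r | ∀ N, ∃ n, N ≤ n ∧ ∃ u, p.seq n = some u ∧ rank u = r}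

/-- Player O wins a play: it is finite, not ended by STOP, and ends at a vertex of
player E, or it is infinite and the maximum rank occurring infinitely often is odd. -/
def OWinsPlay {V : Type*} {A : Arena V} {v : V} (rank : V → ℕ) (p : Play A v) : Prop :=
  (∃ n u, p.seq n = some u ∧ p.seq (n + 1) = none ∧ p.stopped = false ∧
    A.owner u = true) ∨
  ((∀ n, p.seq n ≠ none) ∧ Odd (infRank rank p))

/-- Player E wins a play: it is finite, not ended by STOP, and ends at a vertex of
player O, or it is infinite and the maximum rank occurring infinitely often is even. -/
def EWinsPlay {V : Type*} {A : Arena V} {v : V} (rank : V → ℕ) (p : Play A v) : Prop :=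
  (∃ n u, p.seq n = some u ∧ p.seq (n + 1) = none ∧ p.stopped = false ∧
    A.owner u = false) ∨
  ((∀ n, p.seq n ≠ none) ∧ Even (infRank rank p))

/-- A strategy is safe from `v` if no play from `v` consistent with it is won by O. -/
def SafeFrom {V : Type*} (A : Arena V) (rank : V → ℕ) (ρ : EStrategy A) (v : V) : Prop :=
  ∀ p : Play A v, ConsistentWith ρ p → ¬ OWinsPlay rank p

/-- A strategy is winning from `v` if every play from `v` consistent with it is won
by E. -/
def WinningFrom {V : Type*} (A : Arena V) (rank : V → ℕ) (ρ : EStrategy A) (v : V) :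
    Prop :=
  ∀ p : Play A v, ConsistentWith ρ p → EWinsPlay rank p

/-- A strategy of the ordinary parity game: it never plays STOP when an outgoing
edge exists. -/
def NonStopping {V : Type*} {A : Arena V} (ρ : EStrategy A) : Prop :=
  ∀ h u, A.owner u = true → (∃ w, A.edge u w) → ρ.move h u ≠ none

/-- A strategy is positional if its move depends only on the current vertex. -/
def Positional {V : Type*} {A : Arena V} (ρ : EStrategy A) : Prop :=
  ∀ h h' u, ρ.move h u = ρ.move h' u

/-- `ConsPath A ρ v h u`: starting at `v` there is a finite prefix of a play
consistent with `ρ` whose already-visited vertices are `h` and whose current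
(last) vertex is `u`; the full prefix is `h ++ [u]`. -/
inductive ConsPath {V : Type*} (A : Arena V) (ρ : EStrategy A) (v : V) :
    List V → V → Prop
  | refl : ConsPath A ρ v [] v
  | stepO (h : List V) (u w : V) :
      ConsPath A ρ v h u → A.owner u = false → A.edge u w → ConsPath A ρ v (h ++ [u]) w
  | stepE (h : List V) (u w : V) :
      ConsPath A ρ v h u → A.owner u = true → ρ.move h u = some w →
      ConsPath A ρ v (h ++ [u]) w

/-- The maximum rank of a vertex on a finite prefix of a play. -/
def maxRank {V : Type*} (rank : V → ℕ) (l : List V) : ℕ := (l.map rank).foldr max 0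

/-- The enforcement `Φ(G, ρ, v)` of a strategy `ρ` from a vertex `v` in the stop
parity game with player-aware coloring `χ`: its value at a color `c` is the
`⪯`-minimum of the maximum ranks of finite prefixes of plays from `v` consistent
with `ρ` that end at a vertex `w` of color `c`, where for `w ∈ V_E` only prefixes
at which `ρ` answers STOP are considered (undefined if there is no such prefix). -/
noncomputable def Phi {V C : Type*} (A : Arena V) (rank : V → ℕ) (χ : V → C)
    (ρ : EStrategy A) (v : V) : C → Option ℕ :=
  fun c => pmin {r | ∃ (w : V) (h : List V), χ w = c ∧ ConsPath A ρ v h w ∧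
    (A.owner w = true → ρ.move h w = none) ∧ r = maxRank rank (h ++ [w])}

/-- A set `S` of enforcements is valid for `v`: sound, complete and up-closed. -/
def ValidFamily {V C : Type*} (A : Arena V) (rank : V → ℕ) (χ : V → C) (v : V)
    (S : Set (C → Option ℕ)) : Prop :=
  (∀ P ∈ S, ∃ ρ : EStrategy A, SafeFrom A rank ρ v ∧ esub (Phi A rank χ ρ v) P) ∧
  (∀ ρ : EStrategy A, Positional ρ → SafeFrom A rank ρ v → Phi A rank χ ρ v ∈ S) ∧
  (∀ P ∈ S, ∀ Q, esub P Q → Q ∈ S)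

/-- The arena obtained by adding a directed edge from every vertex of color `s` to
every vertex of color `t`. -/
def addEdges {V C : Type*} (A : Arena V) (χ : V → C) (s t : C) : Arena V where
  owner := A.owner
  edge := fun u w => A.edge u w ∨ (χ u = s ∧ χ w = t)

/-! ### Auxiliary order lemmas -/

lemma preceq_iff'' (p q : ℕ) : preceq p q ↔
    (p = q ∨ (p % 2 = 1 ∧ q % 2 = 0) ∨ (p % 2 = 0 ∧ q % 2 = 0 ∧ p < q) ∨
      (p % 2 = 1 ∧ q % 2 = 1 ∧ q < p)) := by
  unfold preceq prec
  rcases Nat.even_or_odd p with hp | hp <;> rcases Nat.even_or_odd q with hq | hq <;>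
    simp only [hp.neg_one_pow, hq.neg_one_pow, one_mul, neg_mul] <;>
    simp only [Nat.even_iff, Nat.odd_iff] at hp hq <;> omega

lemma preceq_refl (p : ℕ) : preceq p p := by rw [preceq_iff'']; omega

lemma preceq_trans {p q r : ℕ} (h1 : preceq p q) (h2 : preceq q r) : preceq p r := by
  rw [preceq_iff''] at *; omega

lemma preceq_antisymm {p q : ℕ} (h1 : preceq p q) (h2 : preceq q p) : p = q := by
  rw [preceq_iff''] at *; omega

lemma preceq_total (p q : ℕ) : preceq p q ∨ preceq q p := by
  rw [preceq_iff'', preceq_iff'']; omega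

lemma preceq_max_mono {a b a' b' : ℕ} (h1 : preceq a b) (h2 : preceq a' b') :
    preceq (max a a') (max b b') := by
  rw [preceq_iff''] at *; omega

/-- `eZ p = (-1)^p * p`, as a linear-order embedding. -/
def eZ (p : ℕ) : ℤ := if p % 2 = 0 then (p : ℤ) else -(p : ℤ)

lemma preceq_iff_eZ (p q : ℕ) : preceq p q ↔ eZ p ≤ eZ q := by
  rw [preceq_iff'']; unfold eZ; split_ifs <;> omega

/-! ### pmin lemmas -/

lemma pmin_spec {S : Set ℕ} {m : ℕ} (h : pmin S = some m) :
    m ∈ S ∧ ∀ x ∈ S, preceq m x := by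
  unfold pmin at h
  split at h
  · rename_i hex
    obtain ⟨h1, h2⟩ := hex.choose_spec
    cases h
    exact ⟨h1, h2⟩
  · cases h

lemma pmin_eq_some {S : Set ℕ} {m : ℕ} (h1 : m ∈ S) (h2 : ∀ x ∈ S, preceq m x) :
    pmin S = some m := by
  have hex : ∃ m ∈ S, ∀ x ∈ S, preceq m x := ⟨m, h1, h2⟩
  rw [pmin, dif_pos hex]
  exact congrArg some (preceq_antisymm (hex.choose_spec.2 m h1) (h2 _ hex.choose_spec.1))

lemma pmin_empty : pmin (∅ : Set ℕ) = none := by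
  rw [pmin, dif_neg]; simp

lemma pmin_eq_none_iff {S : Set ℕ} (hf : S.Finite) : pmin S = none ↔ S = ∅ := by
  constructor
  · intro h
    by_contra hne
    obtain ⟨m, hm, hmin⟩ := Set.exists_min_image S eZ hf (Set.nonempty_iff_ne_empty.mpr hne)
    rw [pmin_eq_some hm (fun x hx => (preceq_iff_eZ m x).mpr (hmin x hx))] at h
    cases h
  · rintro rfl; exact pmin_empty

lemma pmin_union {S T : Set ℕ} {p q : ℕ} (hS : pmin S = some p) (hT : pmin T = some q) :
    pmin (S ∪ T) = some (if preceq p q then p else q) := by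
  obtain ⟨hpS, hpmin⟩ := pmin_spec hS
  obtain ⟨hqT, hqmin⟩ := pmin_spec hT
  by_cases hpq : preceq p q
  · rw [if_pos hpq]
    refine pmin_eq_some (Or.inl hpS) ?_
    rintro x (hx | hx)
    · exact hpmin x hx
    · exact preceq_trans hpq (hqmin x hx)
  · rw [if_neg hpq]
    have hqp : preceq q p := (preceq_total p q).resolve_left hpq
    refine pmin_eq_some (Or.inr hqT) ?_
    rintro x (hx | hx)
    · exact preceq_trans hqp (hpmin x hx)
    · exact hqmin x hx

/-! ### maxRank lemmas -/

lemma maxRank_append {V : Type*} (rank : V → ℕ) (l1 l2 : List V) :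
    maxRank rank (l1 ++ l2) = max (maxRank rank l1) (maxRank rank l2) := by
  induction l1 with
  | nil => simp [maxRank]
  | cons a t ih =>
    simp only [List.cons_append, maxRank, List.map_cons, List.foldr_cons] at *
    omega

lemma maxRank_mem {V : Type*} (rank : V → ℕ) (l : List V) :
    maxRank rank l = 0 ∨ ∃ u ∈ l, maxRank rank l = rank u := by
  induction l with
  | nil => left; rfl
  | cons a t ih =>
    have hc : maxRank rank (a :: t) = max (rank a) (maxRank rank t) := rfl
    rcases ih with h | ⟨u, hu, h⟩
    · rcases Nat.le_total (rank a) (maxRank rank t) with h2 | h2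
      · left; omega
      · right; exact ⟨a, List.mem_cons_self, by omega⟩
    · rcases Nat.le_total (rank a) (maxRank rank t) with h2 | h2
      · right; exact ⟨u, List.mem_cons_of_mem a hu, by omega⟩
      · right; exact ⟨a, List.mem_cons_self, by omega⟩

lemma maxRank_mem_insert {V : Type*} (rank : V → ℕ) (l : List V) :
    maxRank rank l ∈ insert 0 (Set.range rank) := by
  rcases maxRank_mem rank l with h | ⟨u, _, h⟩
  · exact Or.inl h
  · exact Or.inr ⟨u, h.symm⟩

/-! ### The merged strategy -/

/-- The transition condition: `ρ` answers STOP at a vertex of color `c`. -/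
def tcond {V C : Type*} (A : Arena V) (χ : V → C) (c : C) (ρ : EStrategy A)
    (h : List V) (u : V) : Prop :=
  A.owner u = true ∧ χ u = c ∧ ρ.move h u = none

/-- State machine scanning a history: returns `none` while in phase 1, and
`some h₂` (the phase-2 history for `ρ'`) after the transition. -/
noncomputable def stt {V C : Type*} (A : Arena V) (χ : V → C) (c : C) (ρ : EStrategy A) :
    List V → List V → Option (List V)
  | _, [] => none
  | acc, u :: rest =>
      if tcond A χ c ρ acc u then some rest else stt A χ c ρ (acc ++ [u]) rest

lemma stt_append_some {V C : Type*} {A : Arena V} {χ : V → C} {c : C} {ρ : EStrategy A}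
    {acc l : List V} {h₂ : List V} (h : stt A χ c ρ acc l = some h₂) (l' : List V) :
    stt A χ c ρ acc (l ++ l') = some (h₂ ++ l') := by
  induction l generalizing acc with
  | nil => simp [stt] at h
  | cons u t ih =>
    by_cases hcnd : tcond A χ c ρ acc u
    · rw [stt, if_pos hcnd] at h
      cases h
      rw [List.cons_append, stt, if_pos hcnd]
    · rw [stt, if_neg hcnd] at h
      rw [List.cons_append, stt, if_neg hcnd]
      exact ih h

lemma stt_append_none {V C : Type*} {A : Arena V} {χ : V → C} {c : C} {ρ : EStrategy A}
    {acc l : List V} (h : stt A χ c ρ acc l = none) (l' : List V) :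
    stt A χ c ρ acc (l ++ l') = stt A χ c ρ (acc ++ l) l' := by
  induction l generalizing acc with
  | nil => simp
  | cons u t ih =>
    by_cases hcnd : tcond A χ c ρ acc u
    · rw [stt, if_pos hcnd] at h
      cases h
    · rw [stt, if_neg hcnd] at h
      rw [List.cons_append, stt, if_neg hcnd, ih h]
      simp

lemma stt_snoc_none {V C : Type*} {A : Arena V} {χ : V → C} {c : C} {ρ : EStrategy A}
    {acc l : List V} (h : stt A χ c ρ acc l = none) (u : V) :
    stt A χ c ρ acc (l ++ [u]) =
      if tcond A χ c ρ (acc ++ l) u then some [] else none := by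
  rw [stt_append_none h, stt]
  split_ifs <;> rfl

lemma stt_phase2 {V C : Type*} {A : Arena V} {χ : V → C} {c : C} {ρ : EStrategy A}
    {h1 : List V} {u1 : V} (hst : stt A χ c ρ [] h1 = none)
    (hc : tcond A χ c ρ h1 u1) (h2 : List V) :
    stt A χ c ρ [] (h1 ++ u1 :: h2) = some h2 := by
  have he : h1 ++ u1 :: h2 = (h1 ++ [u1]) ++ h2 := by simp
  have h0 : stt A χ c ρ [] (h1 ++ [u1]) = some [] := by
    rw [stt_snoc_none hst, if_pos (by simpa using hc)]
  rw [he, stt_append_some h0]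
  rfl

/-- The merged strategy: play `ρ`; when `ρ` answers STOP at a vertex of color `c`,
move to `w` instead and play `ρ'` from then on. -/
noncomputable def rho2 {V C : Type*} (A : Arena V) (χ : V → C) (c : C)
    (ρ ρ' : EStrategy A) (w : V) (hedge : ∀ u, χ u = c → A.edge u w) : EStrategy A where
  move := fun h u =>
    match stt A χ c ρ [] h with
    | some h₂ => ρ'.move h₂ u
    | none => if tcond A χ c ρ h u then some w else ρ.move h u
  legal := by
    intro h u x hx
    rcases hst : stt A χ c ρ [] h with _ | h₂ <;> simp only [hst] at hx
    · split_ifs at hx with hcnd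
      · cases hx; exact hedge u hcnd.2.1
      · exact ρ.legal h u x hx
    · exact ρ'.legal h₂ u x hx

lemma rho2_move_none {V C : Type*} {A : Arena V} {χ : V → C} {c : C}
    {ρ ρ' : EStrategy A} {w : V} {hedge : ∀ u, χ u = c → A.edge u w}
    {h : List V} (hst : stt A χ c ρ [] h = none) (u : V) :
    (rho2 A χ c ρ ρ' w hedge).move h u =
      if tcond A χ c ρ h u then some w else ρ.move h u := by
  simp only [rho2, hst]

lemma rho2_move_some {V C : Type*} {A : Arena V} {χ : V → C} {c : C}
    {ρ ρ' : EStrategy A} {w : V} {hedge : ∀ u, χ u = c → A.edge u w}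
    {h h₂ : List V} (hst : stt A χ c ρ [] h = some h₂) (u : V) :
    (rho2 A χ c ρ ρ' w hedge).move h u = ρ'.move h₂ u := by
  simp only [rho2, hst]

/-! ### ConsPath correspondences -/

lemma cp1 {V C : Type*} {A : Arena V} {χ : V → C} {c : C} {ρ ρ' : EStrategy A}
    {w v : V} {hedge : ∀ u, χ u = c → A.edge u w} {h : List V} {u : V}
    (hp : ConsPath A ρ v h u) :
    stt A χ c ρ [] h = none ∧ ConsPath A (rho2 A χ c ρ ρ' w hedge) v h u := by
  induction hp with
  | refl => exact ⟨rfl, .refl⟩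
  | stepO h u u' hp ho he ih =>
    obtain ⟨hst, hp''⟩ := ih
    refine ⟨?_, .stepO h u u' hp'' ho he⟩
    rw [stt_snoc_none hst, if_neg]
    rintro ⟨ho', -⟩
    rw [ho] at ho'; cases ho'
  | stepE h u u' hp ho he ih =>
    obtain ⟨hst, hp''⟩ := ih
    have hnc : ¬ tcond A χ c ρ h u := by
      rintro ⟨-, -, hmv⟩; rw [he] at hmv; cases hmv
    refine ⟨?_, .stepE h u u' hp'' ho ?_⟩
    · rw [stt_snoc_none hst, if_neg (by simpa using hnc)]
    · rw [rho2_move_none hst, if_neg hnc]; exact he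

lemma cp3 {V C : Type*} {A : Arena V} {χ : V → C} {c : C} {ρ ρ' : EStrategy A}
    {w v : V} {hedge : ∀ u, χ u = c → A.edge u w} {h1 : List V} {u1 : V}
    (hp1 : ConsPath A ρ v h1 u1) (hc : tcond A χ c ρ h1 u1)
    {h2 : List V} {u : V} (hp2 : ConsPath A ρ' w h2 u) :
    ConsPath A (rho2 A χ c ρ ρ' w hedge) v (h1 ++ u1 :: h2) u := by
  induction hp2 with
  | refl =>
    obtain ⟨hst, hp''⟩ := cp1 (χ := χ) (c := c) (ρ' := ρ') (w := w) (hedge := hedge) hp1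
    exact .stepE h1 u1 w hp'' hc.1 (by rw [rho2_move_none hst, if_pos hc])
  | stepO h2 u u' hp ho he ih =>
    have := ConsPath.stepO _ u u' ih ho he
    simpa using this
  | stepE h2 u u' hp ho he ih =>
    have hst : stt A χ c ρ [] (h1 ++ u1 :: h2) = some h2 :=
      stt_phase2 (cp1 (χ := χ) (c := c) (ρ' := ρ') (w := w) (hedge := hedge) hp1).1 hc h2
    have hmv : (rho2 A χ c ρ ρ' w hedge).move (h1 ++ u1 :: h2) u = some u' := by
      rw [rho2_move_some hst]; exact he
    have := ConsPath.stepE _ u u' ih ho hmv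
    simpa using this

lemma cp2 {V C : Type*} {A : Arena V} {χ : V → C} {c : C} {ρ ρ' : EStrategy A}
    {w v : V} {hedge : ∀ u, χ u = c → A.edge u w} {h : List V} {u : V}
    (hp : ConsPath A (rho2 A χ c ρ ρ' w hedge) v h u) :
    (stt A χ c ρ [] h = none ∧ ConsPath A ρ v h u) ∨
    ∃ h1 u1 h2, h = h1 ++ u1 :: h2 ∧ stt A χ c ρ [] h = some h2 ∧
      ConsPath A ρ v h1 u1 ∧ tcond A χ c ρ h1 u1 ∧ ConsPath A ρ' w h2 u := by
  induction hp with
  | refl => exact Or.inl ⟨rfl, .refl⟩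
  | stepO h u u' hp ho he ih =>
    rcases ih with ⟨hst, hp1⟩ | ⟨h1, u1, h2, rfl, hst, hp1, hcnd, hp2⟩
    · left
      refine ⟨?_, .stepO _ _ _ hp1 ho he⟩
      rw [stt_snoc_none hst, if_neg]
      rintro ⟨ho', -⟩
      rw [ho] at ho'; cases ho'
    · right
      exact ⟨h1, u1, h2 ++ [u], by simp, by simpa using stt_append_some hst [u],
        hp1, hcnd, .stepO _ _ _ hp2 ho he⟩
  | stepE h u u' hp ho he ih =>
    rcases ih with ⟨hst, hp1⟩ | ⟨h1, u1, h2, rfl, hst, hp1, hcnd, hp2⟩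
    · rw [rho2_move_none hst] at he
      by_cases hcnd : tcond A χ c ρ h u
      · rw [if_pos hcnd] at he
        cases he
        right
        exact ⟨h, u, [], rfl, stt_phase2 hst hcnd [], hp1, hcnd, .refl⟩
      · rw [if_neg hcnd] at he
        left
        refine ⟨?_, .stepE _ _ _ hp1 ho he⟩
        rw [stt_snoc_none hst, if_neg (by simpa using hcnd)]
    · rw [rho2_move_some hst] at he
      right
      exact ⟨h1, u1, h2 ++ [u], by simp, by simpa using stt_append_some hst [u],
        hp1, hcnd, .stepE _ _ _ hp2 ho he⟩

/-! ### Play histories -/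

lemma hist_zero {V : Type*} {A : Arena V} {v : V} (p : Play A v) : p.hist 0 = [] := by
  simp [Play.hist]

lemma hist_succ_some {V : Type*} {A : Arena V} {v : V} (p : Play A v) {n : ℕ} {u : V}
    (h : p.seq n = some u) : p.hist (n + 1) = p.hist n ++ [u] := by
  unfold Play.hist
  rw [List.range_succ, List.filterMap_append]
  simp [h]

lemma hist_succ_none {V : Type*} {A : Arena V} {v : V} (p : Play A v) {n : ℕ}
    (h : p.seq n = none) : p.hist (n + 1) = p.hist n := by
  unfold Play.hist
  rw [List.range_succ, List.filterMap_append]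
  simp [h]

lemma seq_none_le {V : Type*} {A : Arena V} {v : V} (p : Play A v) {i j : ℕ}
    (hij : i ≤ j) (h : p.seq i = none) : p.seq j = none := by
  induction j, hij using Nat.le_induction with
  | base => exact h
  | succ j hj ih => exact p.none_succ j ih

/-! ### Safety of the merged strategy -/

lemma rho2_safe {V C : Type*} (A : Arena V) (rank : V → ℕ) (χ : V → C) (c : C)
    (ρ ρ' : EStrategy A) (v w : V) (hedge : ∀ u, χ u = c → A.edge u w)
    (hρ : SafeFrom A rank ρ v) (hρ' : SafeFrom A rank ρ' w) :
    SafeFrom A rank (rho2 A χ c ρ ρ' w hedge) v := by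
  intro p hcons howin
  by_cases hall : ∀ n, stt A χ c ρ [] (p.hist n) = none
  · refine hρ p ?_ howin
    intro n u hsn howner
    obtain ⟨h1, h2⟩ := hcons n u hsn howner
    refine ⟨?_, h2⟩
    have hnc : ¬ tcond A χ c ρ (p.hist n) u := by
      intro hcnd
      have : stt A χ c ρ [] (p.hist (n + 1)) = some [] := by
        rw [hist_succ_some p hsn, stt_snoc_none (hall n), if_pos (by simpa using hcnd)]
      rw [hall (n + 1)] at this
      cases this
    rw [h1, rho2_move_none (hall n), if_neg hnc]
  · push_neg at hall
    -- find the transition point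
    have h0 : stt A χ c ρ [] (p.hist 0) = none := by rw [hist_zero]; rfl
    have hne : Nat.find hall ≠ 0 := by
      intro h
      exact Nat.find_spec hall (by rw [h]; exact h0)
    obtain ⟨n, hn⟩ : ∃ n, Nat.find hall = n + 1 :=
      ⟨Nat.find hall - 1, by omega⟩
    have hfind : stt A χ c ρ [] (p.hist (n + 1)) ≠ none := by
      rw [← hn]; exact Nat.find_spec hall
    have hmin : stt A χ c ρ [] (p.hist n) = none := by
      by_contra hcon
      have := Nat.find_min' hall hcon
      omega
    obtain ⟨u, hsn⟩ : ∃ u, p.seq n = some u := by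
      rcases hu : p.seq n with _ | u
      · exact absurd (by rw [hist_succ_none p hu]; exact hmin) hfind
      · exact ⟨u, rfl⟩
    have hcnd : tcond A χ c ρ (p.hist n) u := by
      by_contra hcon
      exact hfind (by rw [hist_succ_some p hsn, stt_snoc_none hmin,
        if_neg (by simpa using hcon)])
    have hst1 : stt A χ c ρ [] (p.hist (n + 1)) = some [] := by
      rw [hist_succ_some p hsn, stt_snoc_none hmin, if_pos (by simpa using hcnd)]
    have hmove : p.seq (n + 1) = some w := by
      rw [(hcons n u hsn hcnd.1).1, rho2_move_none hmin, if_pos hcnd]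
    -- the suffix play from w
    set q : Play A w :=
      { seq := fun k => p.seq (n + 1 + k)
        stopped := p.stopped
        start := hmove
        none_succ := fun k hk => p.none_succ (n + 1 + k) hk
        step := fun k a b hab hb => p.step (n + 1 + k) a b hab hb
        maximal := fun k a ha hb => p.maximal (n + 1 + k) a ha hb } with hq
    have hqseq : ∀ k, q.seq k = p.seq (n + 1 + k) := fun _ => rfl
    have hhist : ∀ k, p.hist (n + 1 + k) = p.hist (n + 1) ++ q.hist k := by
      intro k
      induction k with
      | zero => rw [hist_zero]; simp
      | succ k ih =>
        rcases hk : p.seq (n + 1 + k) with _ | a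
        · rw [show n + 1 + (k + 1) = (n + 1 + k) + 1 from rfl, hist_succ_none p hk, ih,
            hist_succ_none q (by rw [hqseq]; exact hk)]
        · rw [show n + 1 + (k + 1) = (n + 1 + k) + 1 from rfl, hist_succ_some p hk, ih,
            hist_succ_some q (by rw [hqseq]; exact hk), List.append_assoc]
    have hst2 : ∀ k, stt A χ c ρ [] (p.hist (n + 1 + k)) = some (q.hist k) := by
      intro k
      rw [hhist k]
      simpa using stt_append_some hst1 (q.hist k)
    have hconsq : ConsistentWith ρ' q := by
      intro k a hka howq
      obtain ⟨e1, e2⟩ := hcons (n + 1 + k) a hka howq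
      refine ⟨?_, e2⟩
      rw [show q.seq (k + 1) = p.seq ((n + 1 + k) + 1) from rfl, e1,
        rho2_move_some (hst2 k)]
    refine hρ' q hconsq ?_
    rcases howin with ⟨m, a, hma, hm1, hstp, hown⟩ | ⟨hinf, hodd⟩
    · left
      have hm : n + 1 ≤ m := by
        by_contra hcon
        have : p.seq (n + 1) = none := seq_none_le p (by omega) hm1
        rw [hmove] at this; cases this
      refine ⟨m - (n + 1), a, ?_, ?_, hstp, hown⟩
      · rw [hqseq, show n + 1 + (m - (n + 1)) = m by omega]; exact hma
      · rw [show q.seq (m - (n + 1) + 1) = p.seq (n + 1 + (m - (n + 1)) + 1) from rfl,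
          show n + 1 + (m - (n + 1)) + 1 = m + 1 by omega]
        exact hm1
    · right
      refine ⟨fun k => hinf (n + 1 + k), ?_⟩
      have hiq : infRank rank q = infRank rank p := by
        unfold infRank
        congr 1
        ext r
        constructor
        · intro h N
          obtain ⟨k, hk, hu⟩ := h N
          exact ⟨n + 1 + k, by omega, hu⟩
        · intro h N
          obtain ⟨m, hm, a, ha, hr⟩ := h (N + (n + 1))
          refine ⟨m - (n + 1), by omega, a, ?_, hr⟩
          rw [hqseq, show n + 1 + (m - (n + 1)) = m by omega]
          exact ha
      rw [hiq]
      exact hodd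

/-! ### The defining set of `Phi` -/

/-- The set of maximum ranks whose `⪯`-minimum defines `Phi`. -/
def PhiSet {V C : Type*} (A : Arena V) (rank : V → ℕ) (χ : V → C) (ρ : EStrategy A)
    (v : V) (y : C) : Set ℕ :=
  {r | ∃ (w : V) (h : List V), χ w = y ∧ ConsPath A ρ v h w ∧
    (A.owner w = true → ρ.move h w = none) ∧ r = maxRank rank (h ++ [w])}

lemma PhiSet_finite {V C : Type*} [Fintype V] (A : Arena V) (rank : V → ℕ) (χ : V → C)
    (ρ : EStrategy A) (v : V) (y : C) : (PhiSet A rank χ ρ v y).Finite := by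
  refine ((Set.finite_range rank).insert 0).subset ?_
  rintro z ⟨w', h, -, -, -, rfl⟩
  exact maxRank_mem_insert rank _

lemma PhiSet_rho2 {V C : Type*} (A : Arena V) (rank : V → ℕ) (CE : Set C) (χ : V → C)
    (hχ : ∀ u, A.owner u = true ↔ χ u ∈ CE) (c : C) (hc : c ∈ CE)
    (ρ ρ' : EStrategy A) (v w : V) (hedge : ∀ u, χ u = c → A.edge u w) (x : C) :
    PhiSet A rank χ (rho2 A χ c ρ ρ' w hedge) v x =
      (if x = c then (∅ : Set ℕ) else PhiSet A rank χ ρ v x) ∪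
        {z | ∃ m ∈ PhiSet A rank χ ρ v c, ∃ q ∈ PhiSet A rank χ ρ' w x, z = max m q} := by
  ext z
  constructor
  · rintro ⟨w', h, hχw, hp, hstop, rfl⟩
    rcases cp2 hp with ⟨hst, hp1⟩ | ⟨h1, u1, h2, rfl, hst, hp1, hcnd, hp2⟩
    · left
      have hxc : x ≠ c := by
        intro hxeq
        rw [hxeq] at hχw
        have how : A.owner w' = true := (hχ w').mpr (by rw [hχw]; exact hc)
        have hthis := hstop how
        rw [rho2_move_none hst] at hthis
        by_cases hcd : tcond A χ c ρ h w'
        · rw [if_pos hcd] at hthis; cases hthis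
        · rw [if_neg hcd] at hthis
          exact hcd ⟨how, hχw, hthis⟩
      rw [if_neg hxc]
      refine ⟨w', h, hχw, hp1, ?_, rfl⟩
      intro how
      have hthis := hstop how
      rw [rho2_move_none hst] at hthis
      by_cases hcd : tcond A χ c ρ h w'
      · rw [if_pos hcd] at hthis; cases hthis
      · rwa [if_neg hcd] at hthis
    · right
      refine ⟨maxRank rank (h1 ++ [u1]), ⟨u1, h1, hcnd.2.1, hp1, fun _ => hcnd.2.2, rfl⟩,
        maxRank rank (h2 ++ [w']), ⟨w', h2, hχw, hp2, ?_, rfl⟩, ?_⟩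
      · intro how
        have hthis := hstop how
        rwa [rho2_move_some hst] at hthis
      · simp only [show (h1 ++ u1 :: h2) ++ [w'] = (h1 ++ [u1]) ++ (h2 ++ [w']) by simp,
          maxRank_append]
  · rintro (hzin | ⟨m, ⟨u1, h1, hχ1, hp1, hstop1, rfl⟩, qq, ⟨w', h2, hχ2, hp2, hstop2, rfl⟩, rfl⟩)
    · by_cases hxc : x = c
      · rw [if_pos hxc] at hzin; exact hzin.elim
      · rw [if_neg hxc] at hzin
        obtain ⟨w', h, hχw, hp1, hstop, rfl⟩ := hzin
        obtain ⟨hst, hp''⟩ := cp1 (ρ' := ρ') (w := w) (hedge := hedge) hp1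
        have hncd : ¬ tcond A χ c ρ h w' := by
          rintro ⟨-, hχc, -⟩
          exact hxc (by rw [← hχw, hχc])
        refine ⟨w', h, hχw, hp'', ?_, rfl⟩
        intro how
        rw [rho2_move_none hst, if_neg hncd]
        exact hstop how
    · have ho1 : A.owner u1 = true := (hχ u1).mpr (by rw [hχ1]; exact hc)
      have hcnd : tcond A χ c ρ h1 u1 := ⟨ho1, hχ1, hstop1 ho1⟩
      refine ⟨w', h1 ++ u1 :: h2, hχ2, cp3 hp1 hcnd hp2, ?_, ?_⟩
      · intro how
        rw [rho2_move_some
          (stt_phase2 (cp1 (ρ' := ρ') (w := w) (hedge := hedge) hp1).1 hcnd h2)]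
        exact hstop2 how
      · simp only [show (h1 ++ u1 :: h2) ++ [w'] = (h1 ++ [u1]) ++ (h2 ++ [w']) by simp,
          maxRank_append]

theorem stmt13 {V C : Type*} [Fintype V] [Fintype C] (A : Arena V) (rank : V → ℕ)
    (CE : Set C) (χ : V → C) (hχ : ∀ u, A.owner u = true ↔ χ u ∈ CE)
    (c : C) (hc : c ∈ CE) (v w : V) (ρ ρ' : EStrategy A)
    (hρ : SafeFrom A rank ρ v) (hρ' : SafeFrom A rank ρ' w)
    (hedge : ∀ u, χ u = c → A.edge u w) :
    ∃ ρ'' : EStrategy A, SafeFrom A rank ρ'' v ∧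
      Phi A rank χ ρ'' v = emerge CE (Phi A rank χ ρ v) c (Phi A rank χ ρ' w) := by
  cases hm : Phi A rank χ ρ v c with
  | none =>
    refine ⟨ρ, hρ, ?_⟩
    simp only [emerge, hm]
  | some r =>
    refine ⟨rho2 A χ c ρ ρ' w hedge, rho2_safe A rank χ c ρ ρ' v w hedge hρ hρ', ?_⟩
    have hm' : pmin (PhiSet A rank χ ρ v c) = some r := hm
    obtain ⟨hrmem, hrmin⟩ := pmin_spec hm'
    funext x
    show pmin (PhiSet A rank χ (rho2 A χ c ρ ρ' w hedge) v x) = _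
    rw [PhiSet_rho2 A rank CE χ hχ c hc ρ ρ' v w hedge x]
    simp only [emerge, hm, if_pos hc]
    rcases hq : Phi A rank χ ρ' w x with _ | q
    · have hq' : pmin (PhiSet A rank χ ρ' w x) = none := hq
      have hRempty : PhiSet A rank χ ρ' w x = ∅ :=
        (pmin_eq_none_iff (PhiSet_finite A rank χ ρ' w x)).mp hq'
      have hS2 : {z | ∃ m ∈ PhiSet A rank χ ρ v c, ∃ q ∈ PhiSet A rank χ ρ' w x,
          z = max m q} = (∅ : Set ℕ) := by
        ext z; simp [hRempty]
      rw [hS2, Set.union_empty]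
      by_cases hxc : x = c
      · rw [if_pos hxc, pmin_empty]
        rw [hxc] at hq
        simp [eunion, elift, hq, hxc]
      · rw [if_neg hxc]
        rcases hp : Phi A rank χ ρ v x with _ | p
        · have hp' : pmin (PhiSet A rank χ ρ v x) = none := hp
          rw [hp']
          simp [eunion, elift, hq, hp, hxc]
        · have hp' : pmin (PhiSet A rank χ ρ v x) = some p := hp
          rw [hp']
          simp [eunion, elift, hq, hp, hxc]
    · have hq' : pmin (PhiSet A rank χ ρ' w x) = some q := hq
      obtain ⟨hqmem, hqmin⟩ := pmin_spec hq'
      have hS2min : pmin {z | ∃ m ∈ PhiSet A rank χ ρ v c, ∃ q' ∈ PhiSet A rank χ ρ' w x,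
          z = max m q'} = some (max r q) := by
        refine pmin_eq_some ⟨r, hrmem, q, hqmem, rfl⟩ ?_
        rintro z ⟨m, hmm, q', hq'm, rfl⟩
        exact preceq_max_mono (hrmin m hmm) (hqmin q' hq'm)
      by_cases hxc : x = c
      · rw [if_pos hxc, Set.empty_union, hS2min]
        rw [hxc] at hq
        simp [eunion, elift, hq, hxc, Nat.max_comm r q]
      · rw [if_neg hxc]
        rcases hp : Phi A rank χ ρ v x with _ | p
        · have hp' : pmin (PhiSet A rank χ ρ v x) = none := hp
          rw [(pmin_eq_none_iff (PhiSet_finite A rank χ ρ v x)).mp hp', Set.empty_union,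
            hS2min]
          simp [eunion, elift, hq, hp, hxc, Nat.max_comm r q]
        · have hp' : pmin (PhiSet A rank χ ρ v x) = some p := hp
          rw [pmin_union hp' hS2min]
          simp [eunion, elift, hq, hp, hxc, Nat.max_comm r q]
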